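/- Let Ĩ, J be random variables on finite sets with I(Ĩ;J) < β, and let α ∈ (0,1). Define I by the kernel P_{I|Ĩ}(i|ĩ) = 1 − α + α·P_{Ĩ}(ĩ) if i = ĩ and α·P_{Ĩ}(i) otherwise, jointly with (Ĩ,J) via the Markov chain I − Ĩ − J. Then P_{I,J}(i,j) ≥ α·P_I(i)·P_J(j) for all (i,j). -/

import Mathlib

/-! The kernel keeps `ĩ` with probability `1 - α` and otherwise resamples it independently
from `P_Ĩ`. Hence `P_{I,J}(i,j) = (1 - α) P_{Ĩ,J}(i,j) + α P_Ĩ(i) P_J(j)` and `P_I = P_Ĩ`,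
so the bound holds with slack `(1 - α) P_{Ĩ,J}(i,j) ≥ 0`. -/

open Finset

section
variable {I J : Type*} [Fintype I] [Fintype J] [DecidableEq I]

/-- Marginal of a joint pmf on the first coordinate. -/
noncomputable def margI (p : I × J → ℝ) : I → ℝ := fun i => ∑ j, p (i, j)

/-- Marginal of a joint pmf on the second coordinate. -/
noncomputable def margJ (p : I × J → ℝ) : J → ℝ := fun j => ∑ i, p (i, j)

open Classical in
/-- Mutual information `I(Ĩ;J) = D(P_{Ĩ,J} ‖ P_{Ĩ}⊗P_J)` (base-2 logarithms). -/
noncomputable def mutInfo (p : I × J → ℝ) : ℝ :=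
  ∑ x, if 0 < p x then p x * Real.logb 2 (p x / (margI p x.1 * margJ p x.2)) else 0

/-- The kernel `P_{I|Ĩ}(i|ĩ) = 1 − α + α·P_{Ĩ}(ĩ)` if `i = ĩ`, and `α·P_{Ĩ}(i)` otherwise
(here `i'` plays the role of `ĩ`). -/
noncomputable def fakeKernel (p : I × J → ℝ) (α : ℝ) : I → I → ℝ :=
  fun i i' => if i = i' then 1 - α + α * margI p i' else α * margI p i

omit [DecidableEq I] in
theorem sum_margJ (p : I × J → ℝ) : ∑ j, margJ p j = ∑ x, p x := by
  rw [Fintype.sum_prod_type, Finset.sum_comm]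
  rfl

theorem sum_fakeKernel_mul (p : I × J → ℝ) (α : ℝ) (i : I) (q : I → ℝ) :
    ∑ i', fakeKernel p α i i' * q i' = (1 - α) * q i + α * margI p i * ∑ i', q i' := by
  have hterm : ∀ i', fakeKernel p α i i' * q i' =
      (if i = i' then (1 - α) * q i' else 0) + α * margI p i * q i' := by
    intro i'
    by_cases h : i = i'
    · subst h; simp only [fakeKernel, if_true]; ring
    · simp only [fakeKernel, h, if_false, zero_add]
  rw [Finset.sum_congr rfl fun i' _ => hterm i', Finset.sum_add_distrib,
    Finset.sum_ite_eq, if_pos (Finset.mem_univ i), Finset.mul_sum]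

theorem sum_sum_fakeKernel_mul {p : I × J → ℝ} (hp : ∑ x, p x = 1) (α : ℝ) (i : I) :
    ∑ i', ∑ j', fakeKernel p α i i' * p (i', j') = margI p i := by
  calc ∑ i', ∑ j', fakeKernel p α i i' * p (i', j')
      = ∑ j', ((1 - α) * p (i, j') + α * margI p i * margJ p j') := by
        rw [Finset.sum_comm]
        exact Finset.sum_congr rfl fun j' _ => sum_fakeKernel_mul p α i _
    _ = (1 - α) * margI p i + α * margI p i * ∑ j', margJ p j' := by
        rw [Finset.sum_add_distrib, ← Finset.mul_sum, ← Finset.mul_sum]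
        rfl
    _ = margI p i := by rw [sum_margJ, hp]; ring

theorem fake_joint_lower_bound_general (p : I × J → ℝ)
    (hp : (∀ x, 0 ≤ p x) ∧ ∑ x, p x = 1)
    (α : ℝ) (hα : α ∈ Set.Ioo (0 : ℝ) 1) :
    ∀ i j, (∑ i', fakeKernel p α i i' * p (i', j)) ≥
      α * (∑ i', ∑ j', fakeKernel p α i i' * p (i', j')) * margJ p j := by
  intro i j
  rw [sum_fakeKernel_mul, sum_sum_fakeKernel_mul hp.2]
  have hstay : 0 ≤ (1 - α) * p (i, j) := mul_nonneg (sub_nonneg.2 hα.2.le) (hp.1 (i, j))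
  exact le_add_of_nonneg_left hstay

/-- with `(I,Ĩ,J)` distributed as `P_{I|Ĩ}(i|ĩ)·P_{Ĩ,J}(ĩ,j)`, the
`(I,J)`-marginal satisfies `P_{I,J}(i,j) ≥ α·P_I(i)·P_J(j)` for all `(i,j)`. -/
theorem fake_joint_lower_bound (p : I × J → ℝ)
    (hp : (∀ x, 0 ≤ p x) ∧ ∑ x, p x = 1)
    (β : ℝ) (hmi : mutInfo p < β)
    (α : ℝ) (hα : α ∈ Set.Ioo (0 : ℝ) 1) :
    ∀ i j, (∑ i', fakeKernel p α i i' * p (i', j)) ≥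
      α * (∑ i', ∑ j', fakeKernel p α i i' * p (i', j')) * margJ p j :=
  fake_joint_lower_bound_general p hp α hα
end
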